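/- arXiv:2409.10234 — 4 statements merged into one kernel-verified Lean document; each statement's English description precedes it below -/
import Mathlib

section
/- Let H be a complex Hilbert space and let Y be a contraction on H with ker(I − Y) = {0}. Then the set {(I − Y*)x : x ∈ H, (I − Y)x ∈ ran D_{Y*}} equals ran(I − Y*) ∩ ran D_Y. (Equivalently, the injective map (I − Y*)(I − Y)^{-1} carries ran(I − Y) ∩ ran D_{Y*} onto ran(I − Y*) ∩ ran D_Y.) -/
/-!
With `D = D_Y` and `D' = D_{Y*}`, the identity `Y (I - Y*Y) = (I - YY*) Y` passes through the
continuous functional calculus to `Y D = D' Y`, hence `Y* D' = D Y*`. So if `(I - Y)x = D'w`, then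
`(I - Y*)x = D²x - Y*(I - Y)x = D(Dx - Y*w) ∈ ran D`. The reverse inclusion is the same argument
applied to `Y*`.
-/

open ContinuousLinearMap

section Intertwining

variable {A : Type*} [Ring A] [StarRing A] [Algebra ℝ A] [TopologicalSpace A]
  [ContinuousFunctionalCalculus ℝ A IsSelfAdjoint] [IsSemitopologicalRing A] [T2Space A]

theorem SemiconjBy.cfc_real {x a b : A} (h : SemiconjBy x a b)
    (ha : IsSelfAdjoint a) (hb : IsSelfAdjoint b) (f : ℝ → ℝ)
    (hf : ContinuousOn f (spectrum ℝ a ∪ spectrum ℝ b)) :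
    SemiconjBy x (cfc f a) (cfc f b) := by
  -- Both calculi are read on the common compact set `σ(a) ∪ σ(b)`, where `x` intertwines them
  -- on polynomials and hence, by density, on all continuous functions.
  set s := spectrum ℝ a ∪ spectrum ℝ b
  have : CompactSpace s := isCompact_iff_compactSpace.mp <|
    (ContinuousFunctionalCalculus.isCompact_spectrum a).union
      (ContinuousFunctionalCalculus.isCompact_spectrum b)
  have key (g : C(s, ℝ)) : SemiconjBy x (cfcHomSuperset ha Set.subset_union_left g)
      (cfcHomSuperset hb Set.subset_union_right g) := by
    induction g using ContinuousMap.induction_on_of_compact with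
    | const r =>
      have : ContinuousMap.const s r = algebraMap ℝ C(s, ℝ) r := rfl
      rw [this, AlgHomClass.commutes, AlgHomClass.commutes]
      exact Algebra.commutes r x |>.symm
    | id => rwa [cfcHomSuperset_id, cfcHomSuperset_id]
    | star_id => rwa [star_trivial, cfcHomSuperset_id, cfcHomSuperset_id]
    | add f g hf hg => rw [map_add, map_add]; exact hf.add_right hg
    | mul f g hf hg => rw [map_mul, map_mul]; exact hf.mul_right hg
    | frequently f hf =>
      have := cfcHomSuperset_continuous ha (Set.subset_union_left (t := spectrum ℝ b))
      have := cfcHomSuperset_continuous hb (Set.subset_union_right (s := spectrum ℝ a))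
      exact hf.mem_of_closed <| isClosed_eq (by fun_prop) (by fun_prop)
  convert key ⟨s.domRestrict f, hf.domRestrict⟩ <;>
    rw [cfcHomSuperset_apply, cfc_apply _ _ _ (hf.mono (by simp [s]))] <;> rfl

end Intertwining

section Defect

variable {A : Type*} [CStarAlgebra A] [PartialOrder A] [StarOrderedRing A]

theorem CStarAlgebra.star_mul_self_le_one {y : A} (hy : ‖y‖ ≤ 1) : star y * y ≤ 1 := by
  rw [← CStarAlgebra.norm_le_one_iff_of_nonneg _ (star_mul_self_nonneg y),
    CStarRing.norm_star_mul_self]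
  exact mul_le_one₀ hy (norm_nonneg y) hy

theorem CFC.sqrt_eq_cfc_real_sqrt {a : A} (ha : 0 ≤ a) : CFC.sqrt a = cfc Real.sqrt a := by
  rw [CFC.sqrt_eq_real_sqrt a ha, cfcₙ_eq_cfc]

theorem mul_sqrt_one_sub_star_mul_self {y : A} (hy : ‖y‖ ≤ 1) :
    y * CFC.sqrt (1 - star y * y) = CFC.sqrt (1 - y * star y) * y := by
  have h₁ : 0 ≤ 1 - star y * y := sub_nonneg.mpr (CStarAlgebra.star_mul_self_le_one hy)
  have h₂ : 0 ≤ 1 - y * star y := by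
    simpa using sub_nonneg.mpr (CStarAlgebra.star_mul_self_le_one (y := star y) (by simpa))
  have hy : SemiconjBy y (1 - star y * y) (1 - y * star y) := by
    simp only [SemiconjBy]; noncomm_ring
  rw [CFC.sqrt_eq_cfc_real_sqrt h₁, CFC.sqrt_eq_cfc_real_sqrt h₂]
  exact hy.cfc_real h₁.isSelfAdjoint h₂.isSelfAdjoint _ Real.continuous_sqrt.continuousOn

end Defect

theorem one_sub_adjoint_apply_mem_range_sqrt
    {H : Type*} [NormedAddCommGroup H] [InnerProductSpace ℂ H] [CompleteSpace H]
    {Y : H →L[ℂ] H} (hY : ‖Y‖ ≤ 1) {x : H}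
    (hx : (1 - Y) x ∈ Set.range ⇑(CFC.sqrt (1 - Y * adjoint Y))) :
    (1 - adjoint Y) x ∈ Set.range ⇑(CFC.sqrt (1 - adjoint Y * Y)) := by
  obtain ⟨w, hw⟩ := hx
  set D := CFC.sqrt (1 - adjoint Y * Y)
  have hD : D * D = 1 - adjoint Y * Y :=
    CFC.sqrt_mul_sqrt_self _ (sub_nonneg.mpr (CStarAlgebra.star_mul_self_le_one hY))
  have hYD : adjoint Y * CFC.sqrt (1 - Y * adjoint Y) = D * adjoint Y := by
    simpa [star_eq_adjoint] using mul_sqrt_one_sub_star_mul_self (y := adjoint Y) (by simpa)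
  refine ⟨D x - adjoint Y w, ?_⟩
  calc D (D x - adjoint Y w) = (D * D) x - (D * adjoint Y) w := by simp
    _ = (1 - adjoint Y * Y) x - adjoint Y ((1 - Y) x) := by rw [hD, ← hYD, mul_apply_eq_comp, hw]
    _ = (1 - adjoint Y) x := by simp

theorem image_of_preimage_defect_eq_inter_general
    {H : Type*} [NormedAddCommGroup H] [InnerProductSpace ℂ H] [CompleteSpace H]
    (Y : H →L[ℂ] H) (hY : ‖Y‖ ≤ 1) :
    {u : H | ∃ x : H, (1 - Y) x ∈ Set.range ⇑(CFC.sqrt (1 - Y * adjoint Y)) ∧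
        u = (1 - adjoint Y) x} =
      Set.range ⇑(1 - adjoint Y) ∩ Set.range ⇑(CFC.sqrt (1 - adjoint Y * Y)) := by
  ext u
  constructor
  · rintro ⟨x, hx, rfl⟩
    exact ⟨⟨x, rfl⟩, one_sub_adjoint_apply_mem_range_sqrt hY hx⟩
  · rintro ⟨⟨x, rfl⟩, hx⟩
    refine ⟨x, ?_, rfl⟩
    simpa using one_sub_adjoint_apply_mem_range_sqrt (Y := adjoint Y) (by simpa) (by simpa using hx)

/-- For a contraction `Y` on a complex Hilbert space with `ker (I - Y) = {0}`,
the set `{(I - Y*)x : x ∈ H, (I - Y)x ∈ ran D_{Y*}}` equals `ran (I - Y*) ∩ ran D_Y`,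
where `D_Y = (I - Y*Y)^{1/2}` and `D_{Y*} = (I - YY*)^{1/2}`. -/
theorem image_of_preimage_defect_eq_inter
    {H : Type*} [NormedAddCommGroup H] [InnerProductSpace ℂ H] [CompleteSpace H]
    (Y : H →L[ℂ] H) (hY : ‖Y‖ ≤ 1) (hker : LinearMap.ker ((1 - Y : H →L[ℂ] H) : H →ₗ[ℂ] H) = ⊥) :
    {u : H | ∃ x : H, (1 - Y) x ∈ Set.range ⇑(CFC.sqrt (1 - Y * adjoint Y)) ∧
        u = (1 - adjoint Y) x} =
      Set.range ⇑(1 - adjoint Y) ∩ Set.range ⇑(CFC.sqrt (1 - adjoint Y * Y)) :=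
  image_of_preimage_defect_eq_inter_general Y hY
end

section
/- Let H be a complex Hilbert space and let Y be a contraction on H with ker(I − Y) = {0}. Then ran D_{Y*} ⊆ ran(I − Y) if and only if ran(I − Y) = ran((I − Y_R)^{1/2}). -/
/-!
With `X = I - Y`, the identity `X X* + D_{Y*}² = 2 (I - Y_R)` gives
`‖X* x‖² + ‖D_{Y*} x‖² = 2 ‖(I - Y_R)^{1/2} x‖²`. By Douglas' lemma
(`ran A ⊆ ran B` iff `‖A* x‖ ≤ c ‖B* x‖` for some `c`) both `ran X` and `ran D_{Y*}` lie in
`ran (I - Y_R)^{1/2}`, and if `ran D_{Y*} ⊆ ran X` then `‖D_{Y*} x‖ ≤ c ‖X* x‖`, so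
`‖(I - Y_R)^{1/2} x‖` is also dominated by `‖X* x‖`, giving the reverse inclusion.
-/

set_option synthInstance.maxHeartbeats 1000000

open ContinuousLinearMap

namespace ContinuousLinearMap

theorem exists_comp_eq_of_range_le {𝕜 E F G : Type*} [NontriviallyNormedField 𝕜]
    [NormedAddCommGroup E] [NormedSpace 𝕜 E] [CompleteSpace E]
    [NormedAddCommGroup F] [NormedSpace 𝕜 F]
    [NormedAddCommGroup G] [NormedSpace 𝕜 G] [CompleteSpace G]
    {A : G →L[𝕜] F} {B : E →L[𝕜] F} (hB : Function.Injective B)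
    (h : LinearMap.range (A : G →ₗ[𝕜] F) ≤ LinearMap.range (B : E →ₗ[𝕜] F)) :
    ∃ C : G →L[𝕜] E, B ∘L C = A := by
  obtain ⟨g, hg⟩ := (B : E →ₗ[𝕜] F).exists_leftInverse_of_injective (LinearMap.ker_eq_bot.2 hB)
  have hBg : ∀ y, B (g (A y)) = A y := by
    intro y
    obtain ⟨e, he⟩ := h (LinearMap.mem_range_self (A : G →ₗ[𝕜] F) y)
    change B e = A y at he
    rw [← he]
    exact congrArg B (LinearMap.congr_fun hg e)
  have hgraph : ((g ∘ₗ (A : G →ₗ[𝕜] F)).graph : Set (G × E)) =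
      (B ∘L snd 𝕜 G E - A ∘L fst 𝕜 G E) ⁻¹' {0} := by
    ext ⟨y, e⟩
    simp only [SetLike.mem_coe, LinearMap.mem_graph_iff, Set.mem_preimage, Set.mem_singleton_iff,
      sub_apply, comp_apply, coe_snd', coe_fst', sub_eq_zero, LinearMap.coe_comp,
      Function.comp_apply]
    exact ⟨fun he => he ▸ hBg y, fun he => hB (he.trans (hBg y).symm)⟩
  refine ⟨.ofIsClosedGraph (g := g ∘ₗ (A : G →ₗ[𝕜] F)) ?_, ext hBg⟩
  rw [hgraph]
  exact isClosed_singleton.preimage (map_continuous _)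

section Douglas

variable {𝕜 E F G : Type*} [RCLike 𝕜]
  [NormedAddCommGroup E] [InnerProductSpace 𝕜 E]
  [NormedAddCommGroup F] [InnerProductSpace 𝕜 F]
  [NormedAddCommGroup G] [InnerProductSpace 𝕜 G] [CompleteSpace G]

theorem exists_inner_apply_eq_of_norm_le {T : E →L[𝕜] G} {f : E →L[𝕜] 𝕜} {M : ℝ}
    (h : ∀ x, ‖f x‖ ≤ M * ‖T x‖) : ∃ w : G, ∀ x, inner 𝕜 w (T x) = f x := by
  let T' : E →ₗ[𝕜] G := T
  have hker : LinearMap.ker T' ≤ LinearMap.ker (f : E →ₗ[𝕜] 𝕜) := fun x hx => by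
    simpa [T', show T x = 0 from hx] using h x
  let ψ : LinearMap.range T' →ₗ[𝕜] 𝕜 :=
    (LinearMap.ker T').liftQ f hker ∘ₗ T'.quotKerEquivRange.symm.toLinearMap
  have hψ : ∀ x, ψ ⟨T' x, LinearMap.mem_range_self T' x⟩ = f x := fun x => by
    have hx : T'.quotKerEquivRange (Submodule.Quotient.mk x) = ⟨T' x, _⟩ := rfl
    simp [ψ, ← hx]
  obtain ⟨g, hg, -⟩ := exists_extension_norm_eq (LinearMap.range T')
    (ψ.mkContinuous M (by rintro ⟨-, x, rfl⟩; rw [hψ x]; exact h x))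
  refine ⟨(InnerProductSpace.toDual 𝕜 G).symm g, fun x => ?_⟩
  rw [InnerProductSpace.toDual_symm_apply]
  exact (hg ⟨T' x, LinearMap.mem_range_self T' x⟩).trans (hψ x)

variable [CompleteSpace E] [CompleteSpace F]

theorem range_le_range_of_norm_adjoint_le {A : G →L[𝕜] F} {B : E →L[𝕜] F} {c : ℝ}
    (h : ∀ x, ‖adjoint A x‖ ≤ c * ‖adjoint B x‖) :
    LinearMap.range (A : G →ₗ[𝕜] F) ≤ LinearMap.range (B : E →ₗ[𝕜] F) := by
  rintro - ⟨y, rfl⟩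
  have hbound : ∀ x, ‖innerSL 𝕜 (A y) x‖ ≤ (c * ‖y‖) * ‖adjoint B x‖ := fun x => calc
    ‖innerSL 𝕜 (A y) x‖ = ‖inner 𝕜 y (adjoint A x)‖ := by
      rw [innerSL_apply_apply, adjoint_inner_right]
    _ ≤ ‖y‖ * (c * ‖adjoint B x‖) :=
      (norm_inner_le_norm _ _).trans (mul_le_mul_of_nonneg_left (h x) (norm_nonneg y))
    _ = (c * ‖y‖) * ‖adjoint B x‖ := by ring
  obtain ⟨w, hw⟩ := exists_inner_apply_eq_of_norm_le hbound
  refine ⟨w, ext_inner_right 𝕜 fun x => ?_⟩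
  simpa [adjoint_inner_right] using hw x

theorem range_le_range_of_norm_sq_adjoint_le {A : G →L[𝕜] F} {B : E →L[𝕜] F} {c : ℝ}
    (h : ∀ x, ‖adjoint A x‖ ^ 2 ≤ c * ‖adjoint B x‖ ^ 2) :
    LinearMap.range (A : G →ₗ[𝕜] F) ≤ LinearMap.range (B : E →ₗ[𝕜] F) :=
  range_le_range_of_norm_adjoint_le (c := √c) fun x => by
    rw [← Real.sqrt_sq (norm_nonneg (adjoint A x)), ← Real.sqrt_sq (norm_nonneg (adjoint B x)),
      ← Real.sqrt_mul' _ (sq_nonneg _)]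
    exact Real.sqrt_le_sqrt (h x)

theorem exists_norm_adjoint_le_of_range_le {A : G →L[𝕜] F} {B : E →L[𝕜] F}
    (h : LinearMap.range (A : G →ₗ[𝕜] F) ≤ LinearMap.range (B : E →ₗ[𝕜] F)) :
    ∃ c, ∀ x, ‖adjoint A x‖ ≤ c * ‖adjoint B x‖ := by
  set K := (LinearMap.ker (B : E →ₗ[𝕜] F))ᗮ
  have hBK : Function.Injective (B ∘L K.subtypeL) := by
    refine (injective_iff_map_eq_zero _).2 fun ⟨v, hv⟩ hBv => ?_
    simpa using Submodule.disjoint_def.1 (Submodule.orthogonal_disjoint _) v hBv hv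
  have hrange : LinearMap.range (B : E →ₗ[𝕜] F) ≤
      LinearMap.range (B ∘L K.subtypeL : K →ₗ[𝕜] F) := by
    rintro - ⟨x, rfl⟩
    obtain ⟨u, hu, v, hv, rfl⟩ := (LinearMap.ker (B : E →ₗ[𝕜] F)).exists_add_mem_mem_orthogonal x
    exact ⟨⟨v, hv⟩, by simp [show B u = 0 from hu]⟩
  obtain ⟨C, hC⟩ := exists_comp_eq_of_range_le hBK (h.trans hrange)
  refine ⟨‖C‖, fun x => ?_⟩
  calc ‖adjoint A x‖ = ‖adjoint C (adjoint K.subtypeL (adjoint B x))‖ := by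
        simp [← hC, adjoint_comp]
    _ ≤ ‖C‖ * ‖adjoint K.subtypeL (adjoint B x)‖ := by
        simpa using (adjoint C).le_opNorm _
    _ ≤ ‖C‖ * ‖adjoint B x‖ := by
        gcongr
        rw [K.adjoint_subtypeL]
        exact (K.orthogonalProjectionOnto.le_of_opNorm_le K.orthogonalProjectionOnto_norm_le _).trans
          (one_mul _).le

end Douglas

end ContinuousLinearMap

namespace CStarAlgebra

variable {A : Type*} [CStarAlgebra A] [PartialOrder A] [StarOrderedRing A] {a : A}

theorem one_sub_mul_star_nonneg (ha : ‖a‖ ≤ 1) : 0 ≤ 1 - a * star a := by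
  rw [sub_nonneg]
  refine mul_star_le_algebraMap_norm_sq.trans ?_
  simpa using algebraMap_mono A (pow_le_one₀ (norm_nonneg a) ha)

theorem one_sub_inv_two_smul_add_star_nonneg (ha : ‖a‖ ≤ 1) :
    0 ≤ 1 - (2⁻¹ : ℂ) • (a + star a) := by
  have hsa : IsSelfAdjoint ((2⁻¹ : ℂ) • (a + star a)) := by
    simp [IsSelfAdjoint, add_comm]
  have hnorm : ‖(2⁻¹ : ℂ) • (a + star a)‖ ≤ 1 := calc
    _ ≤ 2⁻¹ * (‖a‖ + ‖star a‖) := by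
      rw [norm_smul]
      gcongr
      · norm_num
      · exact norm_add_le _ _
    _ ≤ 1 := by rw [norm_star]; linarith
  rw [sub_nonneg]
  refine hsa.le_algebraMap_norm_self.trans ?_
  simpa using algebraMap_mono A hnorm

end CStarAlgebra

theorem mul_star_one_sub_add_one_sub_mul_star {A : Type*} [Ring A] [StarRing A] [Module ℂ A]
    (a : A) :
    (1 - a) * star (1 - a) + (1 - a * star a) = (2 : ℂ) • (1 - (2⁻¹ : ℂ) • (a + star a)) := by
  rw [star_sub, star_one, smul_sub, smul_smul, mul_inv_cancel₀ two_ne_zero, one_smul, two_smul]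
  noncomm_ring

section HilbertSpace

variable {H : Type*} [NormedAddCommGroup H] [InnerProductSpace ℂ H] [CompleteSpace H]

theorem adjoint_cfcSqrt (T : H →L[ℂ] H) : adjoint (CFC.sqrt T) = CFC.sqrt T := by
  rw [← star_eq_adjoint]
  exact (CFC.sqrt_nonneg T).isSelfAdjoint

theorem norm_sq_cfcSqrt_apply {T : H →L[ℂ] H} (hT : 0 ≤ T) (x : H) :
    ‖CFC.sqrt T x‖ ^ 2 = RCLike.re (inner ℂ (T x) x) := by
  rw [apply_norm_sq_eq_inner_adjoint_left, adjoint_cfcSqrt]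
  congr
  exact CFC.sqrt_mul_sqrt_self T hT

theorem norm_sq_adjoint_one_sub_add_norm_sq_sqrt_defect {Y : H →L[ℂ] H} (hY : ‖Y‖ ≤ 1) (x : H) :
    ‖adjoint (1 - Y) x‖ ^ 2 + ‖CFC.sqrt (1 - Y * adjoint Y) x‖ ^ 2 =
      2 * ‖CFC.sqrt (1 - (2⁻¹ : ℂ) • (Y + adjoint Y)) x‖ ^ 2 := by
  have hD := CStarAlgebra.one_sub_mul_star_nonneg hY
  have hR := CStarAlgebra.one_sub_inv_two_smul_add_star_nonneg hY
  have hid := mul_star_one_sub_add_one_sub_mul_star Y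
  simp only [star_eq_adjoint] at hD hR hid
  calc _ = RCLike.re
        (inner ℂ (((1 - Y) * adjoint (1 - Y) + (1 - Y * adjoint Y) : H →L[ℂ] H) x) x) := by
        rw [apply_norm_sq_eq_inner_adjoint_left, adjoint_adjoint, norm_sq_cfcSqrt_apply hD,
          add_apply, inner_add_left, map_add]
        rfl
    _ = _ := by
        rw [hid, norm_sq_cfcSqrt_apply hR, smul_apply, inner_smul_left, map_ofNat,
          RCLike.ofNat_mul_re]

end HilbertSpace

theorem range_defect_le_iff_range_eq_sqrt_real_part_general
    {H : Type*} [NormedAddCommGroup H] [InnerProductSpace ℂ H] [CompleteSpace H]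
    (Y : H →L[ℂ] H) (hY : ‖Y‖ ≤ 1) :
    LinearMap.range ((CFC.sqrt (1 - Y * adjoint Y) : H →L[ℂ] H) : H →ₗ[ℂ] H) ≤
      LinearMap.range ((1 - Y : H →L[ℂ] H) : H →ₗ[ℂ] H) ↔
      LinearMap.range ((1 - Y : H →L[ℂ] H) : H →ₗ[ℂ] H) =
        LinearMap.range ((CFC.sqrt (1 - (2⁻¹ : ℂ) • (Y + adjoint Y)) : H →L[ℂ] H) : H →ₗ[ℂ] H) := by
  have key : ∀ x, ‖adjoint (1 - Y) x‖ ^ 2 + ‖adjoint (CFC.sqrt (1 - Y * adjoint Y)) x‖ ^ 2 =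
      2 * ‖adjoint (CFC.sqrt (1 - (2⁻¹ : ℂ) • (Y + adjoint Y))) x‖ ^ 2 := by
    simpa only [adjoint_cfcSqrt] using norm_sq_adjoint_one_sub_add_norm_sq_sqrt_defect hY
  constructor
  · intro hDX
    obtain ⟨c, hc⟩ := exists_norm_adjoint_le_of_range_le hDX
    refine le_antisymm (range_le_range_of_norm_sq_adjoint_le (c := 2) fun x => ?_)
      (range_le_range_of_norm_sq_adjoint_le (c := (1 + c ^ 2) / 2) fun x => ?_)
    · linarith [key x, sq_nonneg ‖adjoint (CFC.sqrt (1 - Y * adjoint Y)) x‖]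
    · have hc2 := pow_le_pow_left₀ (norm_nonneg _) (hc x) 2
      rw [mul_pow] at hc2
      linarith [key x]
  · intro hXN
    rw [hXN]
    exact range_le_range_of_norm_sq_adjoint_le (c := 2) fun x => by
      linarith [key x, sq_nonneg ‖adjoint (1 - Y) x‖]

/-- For a contraction `Y` on a complex Hilbert space with `ker (I - Y) = {0}`,
`ran D_{Y*} ⊆ ran (I - Y)` iff `ran (I - Y) = ran ((I - Y_R)^{1/2})`, where
`D_{Y*} = (I - YY*)^{1/2}` and `Y_R = (Y + Y*)/2`. -/
theorem range_defect_le_iff_range_eq_sqrt_real_part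
    {H : Type*} [NormedAddCommGroup H] [InnerProductSpace ℂ H] [CompleteSpace H]
    (Y : H →L[ℂ] H) (hY : ‖Y‖ ≤ 1) (hker : LinearMap.ker ((1 - Y : H →L[ℂ] H) : H →ₗ[ℂ] H) = ⊥) :
    LinearMap.range ((CFC.sqrt (1 - Y * adjoint Y) : H →L[ℂ] H) : H →ₗ[ℂ] H) ≤
      LinearMap.range ((1 - Y : H →L[ℂ] H) : H →ₗ[ℂ] H) ↔
      LinearMap.range ((1 - Y : H →L[ℂ] H) : H →ₗ[ℂ] H) =
        LinearMap.range ((CFC.sqrt (1 - (2⁻¹ : ℂ) • (Y + adjoint Y)) : H →L[ℂ] H) : H →ₗ[ℂ] H) :=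
  range_defect_le_iff_range_eq_sqrt_real_part_general Y hY
end

section
/- Let H be a complex Hilbert space and let S be a closed symmetric operator in H whose domain is not dense; set H₀ := closure(dom S) and assume the orthogonal complement (dom S)^⊥ (= H₀^⊥) is finite-dimensional and nonzero. Let S̃ be a selfadjoint extension of S in H. Then the compression S̃₀ of S̃ to H₀, i.e. the operator in the Hilbert space H₀ with dom S̃₀ = dom S̃ ∩ H₀ and S̃₀x = P_{H₀}(S̃x), is a selfadjoint operator in H₀. -/
set_option synthInstance.maxHeartbeats 1000000

open scoped ComplexInnerProductSpace

variable {H : Type*} [NormedAddCommGroup H] [InnerProductSpace ℂ H] [CompleteSpace H]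

/-- The compression of an operator `T` in `H` to a closed subspace `K`: the operator in the
Hilbert space `K` with domain `dom T ∩ K` acting as `x ↦ P_K (T x)`. -/
noncomputable def compression (K : Submodule ℂ H) [CompleteSpace K] (T : H →ₗ.[ℂ] H) :
    (↥K) →ₗ.[ℂ] (↥K) where
  domain := T.domain.comap K.subtype
  toFun := (K.orthogonalProjection).toLinearMap ∘ₗ T.toFun ∘ₗ
    ((K.subtype.domRestrict (T.domain.comap K.subtype)).codRestrict T.domain fun x => x.2)

/- The compression `T₀` of the selfadjoint `S̃` is symmetric, and its domain contains `dom S`,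
hence is dense in `H₀`; so `T₀ ⊆ T₀*`. Conversely, for `y ∈ dom T₀*` the functional
`x ↦ ⟪y, S̃ x⟫ - ⟪T₀* y, x⟫` on `dom S̃` vanishes on `dom S̃ ∩ H₀`, the kernel of `P_{H₀ᗮ}`.
It therefore factors through the finite-dimensional space `H₀ᗮ` and is given by some
`u ∈ H₀ᗮ`, so `y ∈ dom S̃* = dom S̃` with `S̃ y = T₀* y + u`, and projecting to `H₀`
gives `T₀ y = T₀* y`. -/

theorem LinearMap.exists_comp_eq_of_ker_le {K V W V' : Type*} [DivisionRing K]
    [AddCommGroup V] [Module K V] [AddCommGroup W] [Module K W] [AddCommGroup V'] [Module K V']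
    (q : V →ₗ[K] W) (ψ : V →ₗ[K] V') (h : LinearMap.ker q ≤ LinearMap.ker ψ) :
    ∃ ℓ : W →ₗ[K] V', ℓ ∘ₗ q = ψ := by
  obtain ⟨g, hg⟩ := q.rangeRestrict.exists_rightInverse_of_surjective q.range_rangeRestrict
  obtain ⟨ℓ, hℓ⟩ := (ψ ∘ₗ g).exists_extend
  refine ⟨ℓ, LinearMap.ext fun x => ?_⟩
  have hker : x - g (q.rangeRestrict x) ∈ LinearMap.ker q := by
    rw [LinearMap.mem_ker, map_sub, sub_eq_zero]
    exact congrArg Subtype.val (LinearMap.congr_fun hg (q.rangeRestrict x)).symm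
  calc ℓ (q x) = (ℓ ∘ₗ (LinearMap.range q).subtype) (q.rangeRestrict x) := rfl
    _ = ψ (g (q.rangeRestrict x)) := by rw [hℓ]; rfl
    _ = ψ x := (sub_eq_zero.mp (by simpa only [LinearMap.mem_ker, map_sub] using h hker)).symm

theorem LinearMap.exists_inner_eq_of_ker_le {𝕜 E F : Type*} [RCLike 𝕜] [AddCommGroup E]
    [Module 𝕜 E] [NormedAddCommGroup F] [InnerProductSpace 𝕜 F] [FiniteDimensional 𝕜 F]
    (q : E →ₗ[𝕜] F) (ψ : E →ₗ[𝕜] 𝕜) (h : LinearMap.ker q ≤ LinearMap.ker ψ) :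
    ∃ u : F, ∀ x, inner 𝕜 u (q x) = ψ x := by
  have := FiniteDimensional.complete 𝕜 F
  obtain ⟨ℓ, rfl⟩ := q.exists_comp_eq_of_ker_le ψ h
  exact ⟨(InnerProductSpace.toDual 𝕜 F).symm (LinearMap.toContinuousLinearMap ℓ),
    fun x => InnerProductSpace.toDual_symm_apply⟩

theorem IsSelfAdjoint.exists_apply_eq_of_inner_eq {𝕜 E : Type*} [RCLike 𝕜] [NormedAddCommGroup E]
    [InnerProductSpace 𝕜 E] [CompleteSpace E] {A : E →ₗ.[𝕜] E} (hA : IsSelfAdjoint A) {y w : E}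
    (h : ∀ x : A.domain, inner 𝕜 w (x : E) = inner 𝕜 y (A x)) :
    ∃ hy : y ∈ A.domain, A ⟨y, hy⟩ = w := by
  have hy : y ∈ A.adjoint.domain := LinearPMap.mem_adjoint_domain_of_exists y ⟨w, h⟩
  have hle : A.adjoint ≤ A := (LinearPMap.isSelfAdjoint_def.mp hA).le
  exact ⟨hle.1 hy, (hle.2 rfl).symm.trans (LinearPMap.adjoint_apply_eq hA.dense_domain ⟨y, hy⟩ h)⟩

theorem IsSelfAdjoint.isFormalAdjoint {𝕜 E : Type*} [RCLike 𝕜] [NormedAddCommGroup E]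
    [InnerProductSpace 𝕜 E] [CompleteSpace E] {A : E →ₗ.[𝕜] E} (hA : IsSelfAdjoint A) :
    A.IsFormalAdjoint A := by
  simpa only [LinearPMap.isSelfAdjoint_def.mp hA] using
    LinearPMap.adjoint_isFormalAdjoint hA.dense_domain

section Compression

variable (K : Submodule ℂ H) [CompleteSpace K]

omit [CompleteSpace H] in
theorem compression_apply (T : H →ₗ.[ℂ] H) (x : (compression K T).domain) :
    compression K T x = K.orthogonalProjectionOnto (T ⟨x, x.2⟩) := rfl

omit [CompleteSpace H] in
theorem LinearPMap.IsFormalAdjoint.compression {T S : H →ₗ.[ℂ] H} (h : T.IsFormalAdjoint S) :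
    (compression K T).IsFormalAdjoint (compression K S) := by
  intro x y
  rw [compression_apply, compression_apply,
    Submodule.inner_orthogonalProjectionOnto_eq_of_mem_right,
    Submodule.inner_orthogonalProjectionOnto_eq_of_mem_left]
  exact h ⟨_, x.2⟩ ⟨_, y.2⟩

omit [CompleteSpace H] in
theorem exists_mem_orthogonal_inner_adjoint_compression_add_eq [FiniteDimensional ℂ Kᗮ]
    {T : H →ₗ.[ℂ] H} (hdense : Dense ((compression K T).domain : Set K))
    (y : (compression K T).adjoint.domain) :
    ∃ u ∈ Kᗮ, ∀ x : T.domain,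
      ⟪(((compression K T).adjoint y : K) : H) + u, x⟫ = ⟪(y : H), T x⟫ := by
  set z : K := (compression K T).adjoint y
  let ψ : T.domain →ₗ[ℂ] ℂ :=
    innerₛₗ ℂ (y : H) ∘ₗ T.toFun - innerₛₗ ℂ (z : H) ∘ₗ T.domain.subtype
  let q : T.domain →ₗ[ℂ] Kᗮ := Kᗮ.orthogonalProjectionOnto.toLinearMap ∘ₗ T.domain.subtype
  have hker : LinearMap.ker q ≤ LinearMap.ker ψ := by
    intro x hx
    have hxK : (x : H) ∈ K := by
      simpa [q, Submodule.orthogonal_orthogonal] using hx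
    have := LinearPMap.adjoint_isFormalAdjoint hdense y ⟨⟨x, hxK⟩, x.2⟩
    rw [compression_apply, Submodule.inner_orthogonalProjectionOnto_eq_of_mem_left] at this
    simp [ψ, z, ← this]
  obtain ⟨u, hu⟩ := q.exists_inner_eq_of_ker_le ψ hker
  refine ⟨u, u.2, fun x => ?_⟩
  have hux : ⟪(u : H), x⟫ = ψ x :=
    (Kᗮ.inner_orthogonalProjectionOnto_eq_of_mem_left u x).symm.trans (hu x)
  rw [inner_add_left, hux]
  exact add_sub_cancel _ _

theorem adjoint_compression_le [FiniteDimensional ℂ Kᗮ] {T : H →ₗ.[ℂ] H} (hT : IsSelfAdjoint T)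
    (hdense : Dense ((compression K T).domain : Set K)) :
    (compression K T).adjoint ≤ compression K T := by
  refine LinearPMap.le_of_eqLocus_ge fun y hy => ?_
  obtain ⟨u, hu, hinner⟩ :=
    exists_mem_orthogonal_inner_adjoint_compression_add_eq K hdense ⟨y, hy⟩
  obtain ⟨hyT, hTy⟩ := hT.exists_apply_eq_of_inner_eq hinner
  refine ⟨hy, hyT, ?_⟩
  rw [compression_apply, hTy, map_add, Submodule.orthogonalProjectionOnto_mem_subspace_eq_self,
    Submodule.orthogonalProjectionOnto_eq_zero_iff.mpr hu, add_zero]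

end Compression

theorem dense_compression_domain_topologicalClosure {D : Submodule ℂ H} {T : H →ₗ.[ℂ] H}
    (hD : D ≤ T.domain) :
    Dense ((compression D.topologicalClosure T).domain : Set D.topologicalClosure) := by
  refine Subtype.dense_iff.mpr (D.topologicalClosure_coe.le.trans (closure_mono ?_))
  exact fun x hx => ⟨⟨x, D.le_topologicalClosure hx⟩, hD hx, rfl⟩

theorem isSelfAdjoint_compression_of_finite_codim_general
    (S : H →ₗ.[ℂ] H)
    (hfin : FiniteDimensional ℂ ↥(S.domainᗮ))
    (St : H →ₗ.[ℂ] H) (hext : S ≤ St) (hsa : IsSelfAdjoint St) :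
    IsSelfAdjoint (compression S.domain.topologicalClosure St) := by
  have : FiniteDimensional ℂ ↥(S.domain.topologicalClosureᗮ) := by
    rwa [Submodule.orthogonal_closure]
  have hdense := dense_compression_domain_topologicalClosure hext.1
  exact LinearPMap.isSelfAdjoint_def.mpr (le_antisymm (adjoint_compression_le _ hsa hdense)
    ((hsa.isFormalAdjoint.compression _).le_adjoint hdense))

/-- If `S` is a closed symmetric operator with non-dense domain in a complex
Hilbert space `H`, the orthogonal complement of `dom S` is finite-dimensional and nonzero, and
`S̃` is a selfadjoint extension of `S`, then the compression of `S̃` to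
`H₀ = closure (dom S)` is selfadjoint in `H₀`. -/
theorem isSelfAdjoint_compression_of_finite_codim
    (S : H →ₗ.[ℂ] H)
    (hsym : ∀ x y : S.domain, ⟪S x, (y : H)⟫ = ⟪(x : H), S y⟫)
    (hclosed : S.IsClosed)
    (hnd : ¬ Dense (S.domain : Set H))
    (hfin : FiniteDimensional ℂ ↥(S.domainᗮ)) (hne : S.domainᗮ ≠ ⊥)
    (St : H →ₗ.[ℂ] H) (hext : S ≤ St) (hsa : IsSelfAdjoint St) :
    IsSelfAdjoint (compression S.domain.topologicalClosure St) :=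
  isSelfAdjoint_compression_of_finite_codim_general S hfin St hext hsa
end

section
/- Let S be a closed symmetric operator with non-dense domain in a complex Hilbert space H, fix λ ∈ ℂ with Im λ > 0, and set L := (closure(dom S))^⊥, N_λ := (ran(S − λ̄I))^⊥, N_{λ̄} := (ran(S − λI))^⊥, and for nonreal z, N_z := (ran(S − z̄I))^⊥. Fix h ∈ L and ε > 0, and let (z_n) be a sequence in the open upper half-plane with |z_n| → ∞ and Im z_n ≥ ε|z_n| for all n. Suppose for each n there exist f_n ∈ dom S and φ_n ∈ N_{z_n} with (S − λ̄I)f_n + (z_n − λ̄)φ_n = P_{N_λ}h. Then (S − λI)f_n + (z_n − λ)φ_n → P_{N_{λ̄}}h in H. (This expresses the nontangential limit lim_{z→∞, z∈ℂ₊} C_λ^S(z)f = V_λ f for f ∈ P_{N_λ}L, where C_λ^S(z) := (S̃_z − λI)(S̃_z − λ̄I)^{-1}↾N_λ is the characteristic function of S built from the Shtraus extensions S̃_z and V_λ(P_{N_λ}h) = P_{N_{λ̄}}h.) -/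
set_option synthInstance.maxHeartbeats 1000000

open scoped ComplexInnerProductSpace

variable {H : Type*} [NormedAddCommGroup H] [InnerProductSpace ℂ H] [CompleteSpace H]

/-- The deficiency subspace `N_λ = (ran (S - λ̄ I))ᗮ` of an operator `S`; in particular
`defSubspace S z = N_z` and `defSubspace S (conj λ) = N_λ̄`. -/
noncomputable abbrev defSubspace (S : H →ₗ.[ℂ] H) (lam : ℂ) : Submodule ℂ H :=
  (LinearMap.range (S.toFun - (starRingEnd ℂ lam) • S.domain.subtype))ᗮ

/-!
Since `S` is closed and `‖(S - λ̄) u‖ ≥ Im λ ‖u‖`, the range of `S - λ̄` is closed, so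
`h - P_{N_λ} h = (S - λ̄) g` for some `g ∈ dom S`; using `h ⊥ dom S` one checks that
`P_{N_λ̄} h = P_{N_λ} h + (λ - λ̄) g`. With `xₙ = fₙ + g + φₙ` the sequence in question is
`P_{N_λ̄} h + (λ̄ - λ) xₙ`, and `(S - λ̄)(fₙ + g) + (zₙ - λ̄) φₙ = h`. Pairing this with `xₙ` and
using `h ⊥ fₙ + g` gives `Im ⟪φₙ, h⟫ = Im λ ‖xₙ‖² + Im zₙ ‖φₙ‖²`. The right side bounds
`Im zₙ ‖φₙ‖ ≤ ‖h‖`, so `φₙ → 0` because `Im zₙ ≥ ε |zₙ| → ∞`, and then `Im λ ‖xₙ‖² ≤ ‖φₙ‖ ‖h‖`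
gives `xₙ → 0`.
-/

open Filter Topology ComplexConjugate

theorem im_inner_smul_self {E : Type*} [NormedAddCommGroup E] [InnerProductSpace ℂ E]
    (c : ℂ) (v : E) : (⟪v, c • v⟫).im = c.im * ‖v‖ ^ 2 := by
  have him : ⟪v, v⟫.im = 0 := inner_self_im (𝕜 := ℂ) v
  have hre : ⟪v, v⟫.re = ‖v‖ ^ 2 := inner_self_eq_norm_sq (𝕜 := ℂ) v
  rw [inner_smul_right, Complex.mul_im, him, hre]
  ring

theorem tendsto_zero_of_im_inner_eq {E : Type*} [NormedAddCommGroup E] [InnerProductSpace ℂ E]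
    {x φ : ℕ → E} {h : E} {a : ℝ} {b : ℕ → ℝ} (ha : 0 < a) (hb : Tendsto b atTop atTop)
    (hid : ∀ n, (⟪φ n, h⟫).im = a * ‖x n‖ ^ 2 + b n * ‖φ n‖ ^ 2) :
    Tendsto x atTop (𝓝 0) := by
  have hle : ∀ n, (⟪φ n, h⟫).im ≤ ‖φ n‖ * ‖h‖ := fun n =>
    (Complex.im_le_norm _).trans (norm_inner_le_norm _ _)
  have hφ : Tendsto (fun n => ‖φ n‖) atTop (𝓝 0) := by
    refine squeeze_zero' (g := fun n => ‖h‖ / b n) (.of_forall fun n => norm_nonneg _) ?_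
      (tendsto_const_nhds.div_atTop hb)
    filter_upwards [hb.eventually_gt_atTop 0] with n hbn
    rw [le_div_iff₀ hbn]
    rcases (norm_nonneg (φ n)).eq_or_lt with h0 | h0
    · simp [← h0]
    · nlinarith [hid n, hle n, sq_nonneg ‖x n‖]
  have hx : Tendsto (fun n => ‖x n‖) atTop (𝓝 0) := by
    have hlim : Tendsto (fun n => √(‖φ n‖ * ‖h‖ / a)) atTop (𝓝 0) := by
      simpa using ((hφ.mul_const ‖h‖).div_const a).sqrt
    refine squeeze_zero' (.of_forall fun n => norm_nonneg _) ?_ hlim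
    filter_upwards [hb.eventually_ge_atTop 0] with n hbn
    refine Real.le_sqrt_of_sq_le ((le_div_iff₀ ha).2 ?_)
    nlinarith [hid n, hle n, mul_nonneg hbn (sq_nonneg ‖φ n‖)]
  exact tendsto_zero_iff_norm_tendsto_zero.2 hx

namespace LinearPMap

theorem IsClosed.isClosed_range_sub_smul {𝕜 E : Type*} [NontriviallyNormedField 𝕜]
    [NormedAddCommGroup E] [NormedSpace 𝕜 E] [CompleteSpace E] {T : E →ₗ.[𝕜] E}
    (hT : T.IsClosed) (μ : 𝕜) {c : ℝ} (hc : 0 < c)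
    (hbound : ∀ x : T.domain, c * ‖(x : E)‖ ≤ ‖T x - μ • (x : E)‖) :
    _root_.IsClosed (LinearMap.range (T.toFun - μ • T.domain.subtype) : Set E) := by
  refine isClosed_of_closure_subset fun y hy => ?_
  obtain ⟨v, hv, hvy⟩ := mem_closure_iff_seq_limit.1 hy
  choose w hw using hv
  simp only [LinearMap.sub_apply, LinearMap.smul_apply, toFun_eq_coe, Submodule.subtype_apply]
    at hw
  have hw_cauchy : CauchySeq fun k => (w k : E) := by
    refine Metric.cauchySeq_iff.2 fun δ hδ => ?_
    obtain ⟨N, hN⟩ := Metric.cauchySeq_iff.1 hvy.cauchySeq (c * δ) (by positivity)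
    refine ⟨N, fun m hm n hn => ?_⟩
    have hmn := hbound (w m - w n)
    simp only [map_sub, Submodule.coe_sub] at hmn
    rw [dist_eq_norm]
    refine (mul_lt_mul_iff_right₀ hc).1 (hmn.trans_lt ?_)
    simpa only [dist_eq_norm, ← hw, smul_sub, sub_sub_sub_comm] using hN m hm n hn
  obtain ⟨x, hx⟩ := cauchySeq_tendsto_of_complete hw_cauchy
  have hTw : Tendsto (fun k => T (w k)) atTop (𝓝 (y + μ • x)) := by
    simpa only [← hw, sub_add_cancel] using hvy.add (hx.const_smul μ)
  obtain ⟨x', rfl, hTx'⟩ := T.mem_graph_iff.1 <|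
    hT.mem_of_tendsto (hx.prodMk_nhds hTw) (.of_forall fun k => T.mem_graph (w k))
  exact ⟨x', by simp [hTx']⟩

variable {E : Type*} [NormedAddCommGroup E] [InnerProductSpace ℂ E] {S : E →ₗ.[ℂ] E}

theorem im_inner_apply_self_eq_zero (hS : S.IsFormalAdjoint S) (u : S.domain) :
    (⟪(u : E), S u⟫).im = 0 := by
  rw [← Complex.conj_eq_iff_im, inner_conj_symm, hS u u]

theorem abs_im_mul_norm_le_norm_sub_smul (hS : S.IsFormalAdjoint S) (μ : ℂ) (u : S.domain) :
    |μ.im| * ‖(u : E)‖ ≤ ‖S u - μ • (u : E)‖ := by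
  have hle : |μ.im| * ‖(u : E)‖ ^ 2 ≤ ‖(u : E)‖ * ‖S u - μ • (u : E)‖ := by
    calc |μ.im| * ‖(u : E)‖ ^ 2 = |(⟪(u : E), S u - μ • (u : E)⟫).im| := by
          rw [inner_sub_right, Complex.sub_im, im_inner_apply_self_eq_zero hS,
            im_inner_smul_self, zero_sub, abs_neg, abs_mul, abs_of_nonneg (sq_nonneg ‖(u : E)‖)]
      _ ≤ _ := (Complex.abs_im_le_norm _).trans (norm_inner_le_norm _ _)
  rcases (norm_nonneg (u : E)).eq_or_lt with hu | hu
  · simp [← hu]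
  · nlinarith

theorem inner_apply_of_mem_defSubspace {z : ℂ} {p : E} (hp : p ∈ defSubspace S z)
    (u : S.domain) : ⟪S u, p⟫ = z * ⟪(u : E), p⟫ := by
  have h0 : ⟪S u - conj z • (u : E), p⟫ = 0 := hp _ ⟨u, rfl⟩
  rwa [inner_sub_left, inner_smul_left, Complex.conj_conj, sub_eq_zero] at h0

-- `S u + z • p` is the Shtraus extension `S̃_z` applied to `u + p`.
theorem im_inner_add_apply_add_smul (hS : S.IsFormalAdjoint S) {z : ℂ} {p : E}
    (hp : p ∈ defSubspace S z) (u : S.domain) :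
    (⟪(u : E) + p, S u + z • p⟫).im = z.im * ‖p‖ ^ 2 := by
  have hcross : (⟪(u : E), z • p⟫ + ⟪p, S u⟫).im = 0 := by
    rw [← inner_conj_symm p, inner_apply_of_mem_defSubspace hp, inner_smul_right,
      Complex.add_conj, Complex.ofReal_im]
  rw [inner_add_left, inner_add_right, inner_add_right, Complex.add_im, Complex.add_im,
    Complex.add_im, im_inner_apply_self_eq_zero hS, im_inner_smul_self]
  rw [Complex.add_im] at hcross
  linarith

theorem im_inner_eq_of_apply_sub_smul_add_smul_eq (hS : S.IsFormalAdjoint S) {lam z : ℂ}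
    {p h : E} (hp : p ∈ defSubspace S z) (hh : h ∈ S.domainᗮ) {u : S.domain}
    (heq : S u - conj lam • (u : E) + (z - conj lam) • p = h) :
    (⟪p, h⟫).im = lam.im * ‖(u : E) + p‖ ^ 2 + z.im * ‖p‖ ^ 2 := by
  have hu : ⟪(u : E), h⟫ = 0 := hh _ u.2
  have hsplit : h = (S u + z • p) - conj lam • ((u : E) + p) := by
    rw [← heq]; module
  calc (⟪p, h⟫).im = (⟪(u : E) + p, h⟫).im := by rw [inner_add_left, hu, zero_add]
    _ = _ := by
      rw [hsplit, inner_sub_right, Complex.sub_im, im_inner_add_apply_add_smul hS hp,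
        im_inner_smul_self, Complex.conj_im]
      ring

theorem exists_apply_sub_smul_eq_sub_starProjection [CompleteSpace E] (hS : S.IsFormalAdjoint S)
    (hT : S.IsClosed) {μ : ℂ} (hμ : μ.im ≠ 0) (h : E) :
    ∃ g : S.domain, S g - conj μ • (g : E) = h - (defSubspace S μ).starProjection h := by
  have hrange : _root_.IsClosed
      (LinearMap.range (S.toFun - conj μ • S.domain.subtype) : Set E) :=
    hT.isClosed_range_sub_smul (conj μ) (abs_pos.2 hμ) fun x => by
      simpa only [Complex.conj_im, abs_neg] using abs_im_mul_norm_le_norm_sub_smul hS (conj μ) x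
  have hmem := (defSubspace S μ).sub_starProjection_mem_orthogonal h
  rw [Submodule.orthogonal_orthogonal_eq_closure, hrange.submodule_topologicalClosure_eq] at hmem
  exact hmem

theorem starProjection_defSubspace_conj [CompleteSpace E] (hS : S.IsFormalAdjoint S) {μ : ℂ}
    {h : E} (hh : h ∈ S.domainᗮ) {g : S.domain}
    (hg : S g - conj μ • (g : E) = h - (defSubspace S μ).starProjection h) :
    (defSubspace S (conj μ)).starProjection h
      = (defSubspace S μ).starProjection h + (μ - conj μ) • (g : E) := by
  set P := (defSubspace S μ).starProjection h
  have hP : P ∈ defSubspace S μ := (defSubspace S μ).starProjection_apply_mem h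
  have hSg : (S g : E) = h - P + conj μ • (g : E) := by rw [← hg, sub_add_cancel]
  refine Submodule.eq_starProjection_of_mem_orthogonal' (z := S g - μ • (g : E)) ?_
    (Submodule.le_orthogonal_orthogonal _ ⟨g, by simp⟩) (by rw [hSg]; module)
  rintro _ ⟨d, rfl⟩
  have hSg_inner : ⟪(d : E), S g⟫ = -⟪(d : E), P⟫ + conj μ * ⟪(d : E), (g : E)⟫ := by
    rw [hSg, inner_add_right, inner_sub_right, inner_smul_right, hh _ d.2, zero_sub]
  simp only [LinearMap.sub_apply, LinearMap.smul_apply, toFun_eq_coe, Submodule.subtype_apply,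
    Complex.conj_conj]
  rw [inner_sub_left, inner_add_right, inner_add_right]
  simp only [inner_smul_left, inner_smul_right]
  rw [inner_apply_of_mem_defSubspace hP, hS d g, hSg_inner]
  ring

end LinearPMap

theorem tendsto_characteristicFunction_to_Vlambda_general
    (S : H →ₗ.[ℂ] H)
    (hsym : ∀ x y : S.domain, ⟪S x, (y : H)⟫ = ⟪(x : H), S y⟫)
    (hclosed : S.IsClosed)
    (lam : ℂ) (hlam : 0 < lam.im)
    (h : H) (hh : h ∈ S.domainᗮ)
    (ε : ℝ) (hε : 0 < ε)
    (z : ℕ → ℂ)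
    (habs : Filter.Tendsto (fun n => ‖z n‖) Filter.atTop Filter.atTop)
    (hnontang : ∀ n, ε * ‖z n‖ ≤ (z n).im)
    (f : ℕ → H) (hf : ∀ n, f n ∈ S.domain)
    (φ : ℕ → H) (hφ : ∀ n, φ n ∈ defSubspace S (z n))
    (heq : ∀ n, (S ⟨f n, hf n⟩ - (starRingEnd ℂ lam) • f n) +
        (z n - starRingEnd ℂ lam) • φ n =
      (Submodule.orthogonalProjection (defSubspace S lam) h : H)) :
    Filter.Tendsto
      (fun n => (S ⟨f n, hf n⟩ - lam • f n) + (z n - lam) • φ n)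
      Filter.atTop
      (nhds ((Submodule.orthogonalProjection (defSubspace S (starRingEnd ℂ lam)) h : H))) := by
  simp only [← Submodule.starProjection_apply] at heq ⊢
  obtain ⟨g, hg⟩ := LinearPMap.exists_apply_sub_smul_eq_sub_starProjection hsym hclosed hlam.ne' h
  set u : ℕ → S.domain := fun n => ⟨f n, hf n⟩ + g
  have hu : ∀ n, S (u n) - conj lam • (u n : H) + (z n - conj lam) • φ n = h := fun n => by
    simp only [u, LinearPMap.map_add, Submodule.coe_add]
    linear_combination (norm := module) heq n + hg
  have hzim : Tendsto (fun n => (z n).im) atTop atTop :=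
    tendsto_atTop_mono hnontang (habs.const_mul_atTop hε)
  have hx : Tendsto (fun n => (u n : H) + φ n) atTop (𝓝 0) :=
    tendsto_zero_of_im_inner_eq hlam hzim fun n =>
      LinearPMap.im_inner_eq_of_apply_sub_smul_add_smul_eq hsym (hφ n) hh (hu n)
  have hseq : ∀ n, S ⟨f n, hf n⟩ - lam • f n + (z n - lam) • φ n
      = (defSubspace S (conj lam)).starProjection h + (conj lam - lam) • ((u n : H) + φ n) :=
    fun n => by
      rw [LinearPMap.starProjection_defSubspace_conj hsym hh hg]
      simp only [u, Submodule.coe_add]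
      linear_combination (norm := module) heq n
  simpa [hseq] using tendsto_const_nhds.add (hx.const_smul (conj lam - lam))

/-- Let `S` be a closed symmetric operator with non-dense domain,
`L = (closure (dom S))ᗮ`, `Im λ > 0`, `h ∈ L`, `ε > 0`, and let `(z_n) ⊆ ℂ₊` with
`|z_n| → ∞` and `Im z_n ≥ ε |z_n|`.  If `f_n ∈ dom S` and `φ_n ∈ N_{z_n}` satisfy
`(S - λ̄ I) f_n + (z_n - λ̄) φ_n = P_{N_λ} h`, then
`(S - λ I) f_n + (z_n - λ) φ_n → P_{N_λ̄} h`.  (This is the nontangential limit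
`lim_{z→∞} C_λ^S(z) f = V_λ f` for `f ∈ P_{N_λ} L` of the characteristic function of `S`.) -/
theorem tendsto_characteristicFunction_to_Vlambda
    (S : H →ₗ.[ℂ] H)
    (hsym : ∀ x y : S.domain, ⟪S x, (y : H)⟫ = ⟪(x : H), S y⟫)
    (hclosed : S.IsClosed)
    (hnd : ¬ Dense (S.domain : Set H))
    (lam : ℂ) (hlam : 0 < lam.im)
    (h : H) (hh : h ∈ S.domainᗮ)
    (ε : ℝ) (hε : 0 < ε)
    (z : ℕ → ℂ) (hupper : ∀ n, 0 < (z n).im)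
    (habs : Filter.Tendsto (fun n => ‖z n‖) Filter.atTop Filter.atTop)
    (hnontang : ∀ n, ε * ‖z n‖ ≤ (z n).im)
    (f : ℕ → H) (hf : ∀ n, f n ∈ S.domain)
    (φ : ℕ → H) (hφ : ∀ n, φ n ∈ defSubspace S (z n))
    (heq : ∀ n, (S ⟨f n, hf n⟩ - (starRingEnd ℂ lam) • f n) +
        (z n - starRingEnd ℂ lam) • φ n =
      (Submodule.orthogonalProjection (defSubspace S lam) h : H)) :
    Filter.Tendsto
      (fun n => (S ⟨f n, hf n⟩ - lam • f n) + (z n - lam) • φ n)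
      Filter.atTop
      (nhds ((Submodule.orthogonalProjection (defSubspace S (starRingEnd ℂ lam)) h : H))) :=
  tendsto_characteristicFunction_to_Vlambda_general S hsym hclosed lam hlam h hh ε hε z habs
    hnontang f hf φ hφ heq
end
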